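/- arXiv:2307.01942 — 9 statements merged into one kernel-verified Lean document; each statement's English description precedes it below -/
import Mathlib

section
/- Let X, Y ∈ ℝ^{n×d} with d = p+q, both of full column rank, and let I_{p,q} = diag(1,...,1,-1,...,-1) with p ones and q minus ones. If X I_{p,q} X^T = Y I_{p,q} Y^T, then there exists Q in the indefinite orthogonal group O_{p,q} (i.e., Q I_{p,q} Q^T = I_{p,q}) such that Y = XQ. Conversely, if Y = XQ for some Q ∈ O_{p,q}, then X I_{p,q} X^T = Y I_{p,q} Y^T. -/
open Matrix

/-- The signature matrix `I_{p,q} = diag(1,…,1,-1,…,-1)` with `p` ones and `q` minus ones. -/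
noncomputable def Ipq (p q : ℕ) : Matrix (Fin (p + q)) (Fin (p + q)) ℝ :=
  Matrix.diagonal (fun i => if (i : ℕ) < p then (1 : ℝ) else -1)

lemma Ipq_mul_Ipq (p q : ℕ) : Ipq p q * Ipq p q = 1 := by
  have hfun : (fun i : Fin (p + q) =>
      (if (i : ℕ) < p then (1 : ℝ) else -1) * (if (i : ℕ) < p then (1 : ℝ) else -1)) =
      fun _ => (1 : ℝ) := by
    funext i
    by_cases h : (i : ℕ) < p <;> simp [h]
  unfold Ipq
  rw [Matrix.diagonal_mul_diagonal, hfun, Matrix.diagonal_one]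

lemma Ipq_transpose (p q : ℕ) : (Ipq p q)ᵀ = Ipq p q := by
  unfold Ipq
  exact Matrix.diagonal_transpose _

lemma isUnit_of_rank_eq_card {m : Type*} [Fintype m] [DecidableEq m]
    (A : Matrix m m ℝ) (h : A.rank = Fintype.card m) : IsUnit A := by
  rw [← Matrix.mulVec_surjective_iff_isUnit]
  have hr : LinearMap.range A.mulVecLin = ⊤ := by
    apply Submodule.eq_top_of_finrank_eq
    rw [← Matrix.rank, h, Module.finrank_fintype_fun_eq_card]
  intro v
  obtain ⟨w, hw⟩ := LinearMap.range_eq_top.mp hr v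
  exact ⟨w, hw⟩

lemma cancel_left {n d k : ℕ} {X : Matrix (Fin n) (Fin d) ℝ} {P : Matrix (Fin d) (Fin n) ℝ}
    (hP : P * X = 1) {A B : Matrix (Fin d) (Fin k) ℝ} (h : X * A = X * B) : A = B := by
  have := congrArg (fun M => P * M) h
  simpa [← Matrix.mul_assoc, hP] using this

lemma cancel_right {n d k : ℕ} {C : Matrix (Fin d) (Fin n) ℝ} {R : Matrix (Fin n) (Fin d) ℝ}
    (hR : C * R = 1) {A B : Matrix (Fin k) (Fin d) ℝ} (h : A * C = B * C) : A = B := by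
  have := congrArg (fun M => M * R) h
  simpa [Matrix.mul_assoc, hR] using this

/-- For full column rank `X, Y ∈ ℝ^{n×d}` with `d = p + q`, one has
`X I_{p,q} Xᵀ = Y I_{p,q} Yᵀ` if and only if `Y = X Q` for some `Q` in the indefinite
orthogonal group `O_{p,q}`. -/
theorem equiv_iff_same_prob_matrix {n p q : ℕ}
    (X Y : Matrix (Fin n) (Fin (p + q)) ℝ)
    (hX : X.rank = p + q) (hY : Y.rank = p + q) :
    X * Ipq p q * Xᵀ = Y * Ipq p q * Yᵀ ↔
      ∃ Q : Matrix (Fin (p + q)) (Fin (p + q)) ℝ,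
        Q * Ipq p q * Qᵀ = Ipq p q ∧ Y = X * Q := by
  constructor
  · intro h
    set J := Ipq p q with hJ
    have hJJ : J * J = 1 := Ipq_mul_Ipq p q
    have hJT : Jᵀ = J := Ipq_transpose p q
    -- invertibility of Gram matrices
    have hXU : IsUnit (Xᵀ * X) := by
      apply isUnit_of_rank_eq_card
      rw [Matrix.rank_transpose_mul_self, hX, Fintype.card_fin]
    have hYU : IsUnit (Yᵀ * Y) := by
      apply isUnit_of_rank_eq_card
      rw [Matrix.rank_transpose_mul_self, hY, Fintype.card_fin]
    have hXd : IsUnit (Xᵀ * X).det := (Matrix.isUnit_iff_isUnit_det _).mp hXU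
    have hYd : IsUnit (Yᵀ * Y).det := (Matrix.isUnit_iff_isUnit_det _).mp hYU
    set P := (Xᵀ * X)⁻¹ * Xᵀ with hPdef
    have hPX : P * X = 1 := by
      rw [hPdef, Matrix.mul_assoc, Matrix.nonsing_inv_mul _ hXd]
    -- right inverse of (J * Yᵀ)
    set R := Y * ((Yᵀ * Y)⁻¹ * J) with hRdef
    have hJYR : (J * Yᵀ) * R = 1 := by
      rw [hRdef]
      rw [Matrix.mul_assoc J Yᵀ, ← Matrix.mul_assoc Yᵀ, ← Matrix.mul_assoc (Yᵀ * Y),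
        Matrix.mul_nonsing_inv _ hYd, Matrix.one_mul, hJJ]
    set Q := P * Y with hQdef
    have hXPX : X * P * X = X := by
      rw [Matrix.mul_assoc, hPX, Matrix.mul_one]
    have key : X * Q = Y := by
      apply cancel_right hJYR
      calc X * Q * (J * Yᵀ) = X * P * (Y * J * Yᵀ) := by
            rw [hQdef]; simp only [Matrix.mul_assoc]
        _ = X * P * (X * J * Xᵀ) := by rw [← h]
        _ = (X * P * X) * J * Xᵀ := by simp only [Matrix.mul_assoc]
        _ = X * J * Xᵀ := by rw [hXPX]
        _ = Y * J * Yᵀ := h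
        _ = Y * (J * Yᵀ) := by rw [Matrix.mul_assoc]
    refine ⟨Q, ?_, key.symm⟩
    -- X * (Q * J * Qᵀ) * Xᵀ = X * J * Xᵀ
    have h1 : X * (Q * J * Qᵀ) * Xᵀ = X * J * Xᵀ := by
      have e : X * (Q * J * Qᵀ) * Xᵀ = (X * Q) * J * (X * Q)ᵀ := by
        rw [Matrix.transpose_mul X Q]; simp only [Matrix.mul_assoc]
      rw [e, key]; exact h.symm
    have h2 : (Q * J * Qᵀ) * Xᵀ = J * Xᵀ := by
      apply cancel_left hPX
      simp only [← Matrix.mul_assoc] at h1 ⊢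
      exact h1
    have h3 : X * (Q * J * Qᵀ) = X * J := by
      have := congrArg Matrix.transpose h2
      simpa [Matrix.transpose_mul, hJT, Matrix.mul_assoc] using this
    have h4 : Q * J * Qᵀ = J := cancel_left hPX h3
    exact h4
  · rintro ⟨Q, hQ, rfl⟩
    rw [Matrix.transpose_mul]
    calc X * Ipq p q * Xᵀ = X * (Q * Ipq p q * Qᵀ) * Xᵀ := by rw [hQ]
      _ = X * Q * Ipq p q * (Qᵀ * Xᵀ) := by simp only [Matrix.mul_assoc]
end

section
/- Let X = U_X Λ_X^{1/2} and Y = U_Y Λ_Y^{1/2} where U_X, U_Y ∈ ℝ^{n×d} have orthonormal columns and Λ_X, Λ_Y are diagonal positive definite, and suppose X I_{p,q} X^T = Y I_{p,q} Y^T. Then there exists a matrix W ∈ O_d ∩ O_{p,q} such that U_X Λ_X^{1/2} = U_Y Λ_Y^{1/2} W. -/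
open Matrix

/-!
Write `σ` for the diagonal of `I_{p,q}`. The hypothesis says
`U_X diag(σ λ_X) U_Xᵀ = U_Y diag(σ λ_Y) U_Yᵀ`. Multiplying by `U_Yᵀ` and `U_X` shows that
`W = U_Yᵀ U_X` intertwines `diag(σ λ_Y)` and `diag(σ λ_X)` and, as `diag(σ λ_X)` is invertible,
that `U_X = U_Y W`; orthonormality of the columns then makes `W` orthogonal.
An intertwiner of two diagonal matrices only links equal entries, so it also intertwines any
function of them; since `λ > 0`, both `σ = sign(σ λ)` and `√λ = √|σ λ|` are such functions,
giving `I_{p,q} W = W I_{p,q}` and `Λ_Y^{1/2} W = W Λ_X^{1/2}`.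
-/

theorem Real.sign_mul_of_abs_eq_one_of_pos {s l : ℝ} (hs : |s| = 1) (hl : 0 < l) :
    Real.sign (s * l) = s := by
  rcases (abs_eq zero_le_one).mp hs with rfl | rfl <;>
    simp [Real.sign_of_pos, Real.sign_of_neg, hl]

theorem Real.sqrt_abs_mul_of_abs_eq_one {s l : ℝ} (hs : |s| = 1) (hl : 0 ≤ l) :
    √|s * l| = √l := by
  rw [abs_mul, hs, one_mul, abs_of_nonneg hl]

namespace Matrix

variable {m n R : Type*} [Fintype n] [DecidableEq n]

theorem diagonal_comp_mul_eq_mul_diagonal_comp [Fintype m] [DecidableEq m] [CommRing R]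
    [NoZeroDivisors R] {a : m → R} {b : n → R} {A : Matrix m n R}
    (h : diagonal a * A = A * diagonal b) (g : R → R) : diagonal (g ∘ a) * A = A * diagonal (g ∘ b) := by
  ext i j
  have hij : a i * A i j = A i j * b j := by simpa using congrFun (congrFun h i) j
  simp only [diagonal_mul, mul_diagonal, Function.comp_apply]
  by_cases hA : A i j = 0
  · simp [hA]
  · rw [mul_comm, mul_right_cancel₀ hA (hij.trans (mul_comm _ _))]

variable [CommRing R]

theorem mul_diagonal_mul_diagonal_mul_transpose (U : Matrix m n R) (d s : n → R) :
    U * diagonal d * diagonal s * (U * diagonal d)ᵀ =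
      U * diagonal (fun i => s i * (d i * d i)) * Uᵀ := by
  rw [transpose_mul, diagonal_transpose, Matrix.mul_assoc, Matrix.mul_assoc,
    ← Matrix.mul_assoc (diagonal s), diagonal_mul_diagonal, ← Matrix.mul_assoc (diagonal d),
    diagonal_mul_diagonal, ← Matrix.mul_assoc]
  congr 3
  ext i
  ring

variable [Fintype m] {X Y : Matrix m n R} {M N : Matrix n n R}

theorem transpose_mul_intertwines_of_mul_mul_transpose_eq (hX : Xᵀ * X = 1) (hY : Yᵀ * Y = 1)
    (h : X * M * Xᵀ = Y * N * Yᵀ) : N * (Yᵀ * X) = Yᵀ * X * M :=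
  calc N * (Yᵀ * X) = Yᵀ * (Y * N * Yᵀ) * X := by
        simp only [← Matrix.mul_assoc, hY, Matrix.one_mul]
    _ = Yᵀ * (X * M * Xᵀ) * X := by rw [h]
    _ = Yᵀ * X * M := by simp only [Matrix.mul_assoc, hX, Matrix.mul_one]

theorem eq_mul_transpose_mul_of_mul_mul_transpose_eq (hX : Xᵀ * X = 1) (hY : Yᵀ * Y = 1)
    (hM : IsUnit M.det) (h : X * M * Xᵀ = Y * N * Yᵀ) : X = Y * (Yᵀ * X) := by
  have hXM : X * M = Y * (Yᵀ * X) * M :=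
    calc X * M = X * M * Xᵀ * X := by simp only [Matrix.mul_assoc, hX, Matrix.mul_one]
      _ = Y * (N * (Yᵀ * X)) := by rw [h]; simp only [Matrix.mul_assoc]
      _ = Y * (Yᵀ * X) * M := by
        rw [transpose_mul_intertwines_of_mul_mul_transpose_eq hX hY h]
        simp only [Matrix.mul_assoc]
  calc X = X * M * M⁻¹ := (mul_nonsing_inv_cancel_right M X hM).symm
    _ = Y * (Yᵀ * X) := by rw [hXM, mul_nonsing_inv_cancel_right M _ hM]

theorem transpose_mul_self_eq_one_of_eq_mul {A : Matrix n n R} (hX : Xᵀ * X = 1)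
    (hY : Yᵀ * Y = 1) (hXY : X = Y * A) : Aᵀ * A = 1 := by
  rw [← hX, hXY, transpose_mul, Matrix.mul_assoc, ← Matrix.mul_assoc Yᵀ, hY, Matrix.one_mul]

end Matrix

/-- If `U_X Λ_X^{1/2}` and `U_Y Λ_Y^{1/2}` (with `U_X, U_Y` having orthonormal columns and
`Λ_X, Λ_Y` diagonal positive definite) induce the same matrix `X I_{p,q} Xᵀ`, then they differ
by right multiplication by some `W ∈ O_d ∩ O_{p,q}`. -/
theorem exists_orthogonal_indefinite_aligning {n p q : ℕ}
    (UX UY : Matrix (Fin n) (Fin (p + q)) ℝ)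
    (lX lY : Fin (p + q) → ℝ)
    (hUX : UXᵀ * UX = 1) (hUY : UYᵀ * UY = 1)
    (hlX : ∀ i, 0 < lX i) (hlY : ∀ i, 0 < lY i)
    (h : (UX * Matrix.diagonal fun i => Real.sqrt (lX i)) * Ipq p q *
          (UX * Matrix.diagonal fun i => Real.sqrt (lX i))ᵀ =
        (UY * Matrix.diagonal fun i => Real.sqrt (lY i)) * Ipq p q *
          (UY * Matrix.diagonal fun i => Real.sqrt (lY i))ᵀ) :
    ∃ W : Matrix (Fin (p + q)) (Fin (p + q)) ℝ,
      W ∈ Matrix.orthogonalGroup (Fin (p + q)) ℝ ∧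
      W * Ipq p q * Wᵀ = Ipq p q ∧
      UX * Matrix.diagonal (fun i => Real.sqrt (lX i)) =
        UY * Matrix.diagonal (fun i => Real.sqrt (lY i)) * W := by
  set σ : Fin (p + q) → ℝ := fun i => if (i : ℕ) < p then 1 else -1
  have hσ : ∀ i, |σ i| = 1 := fun i => by by_cases hi : (i : ℕ) < p <;> simp [σ, hi]
  have hIpq : Ipq p q = diagonal σ := rfl
  rw [hIpq, mul_diagonal_mul_diagonal_mul_transpose, mul_diagonal_mul_diagonal_mul_transpose] at h
  simp only [fun i => Real.mul_self_sqrt (hlX i).le, fun i => Real.mul_self_sqrt (hlY i).le] at h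
  have hdet : IsUnit (diagonal fun i => σ i * lX i).det := by
    rw [det_diagonal, isUnit_iff_ne_zero, Finset.prod_ne_zero_iff]
    exact fun i _ => mul_ne_zero (abs_ne_zero.mp (by simp [hσ i])) (hlX i).ne'
  set W := UYᵀ * UX
  have hUXW : UX = UY * W := eq_mul_transpose_mul_of_mul_mul_transpose_eq hUX hUY hdet h
  have hWW : Wᵀ * W = 1 := transpose_mul_self_eq_one_of_eq_mul hUX hUY hUXW
  have hintertwine := transpose_mul_intertwines_of_mul_mul_transpose_eq hUX hUY h
  have hWσ : diagonal σ * W = W * diagonal σ := by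
    simpa only [Function.comp_def, fun i => Real.sign_mul_of_abs_eq_one_of_pos (hσ i) (hlX i),
      fun i => Real.sign_mul_of_abs_eq_one_of_pos (hσ i) (hlY i)] using
      diagonal_comp_mul_eq_mul_diagonal_comp hintertwine Real.sign
  have hWsqrt : (diagonal fun i => √(lY i)) * W = W * diagonal fun i => √(lX i) := by
    simpa only [Function.comp_def, fun i => Real.sqrt_abs_mul_of_abs_eq_one (hσ i) (hlX i).le,
      fun i => Real.sqrt_abs_mul_of_abs_eq_one (hσ i) (hlY i).le] using
      diagonal_comp_mul_eq_mul_diagonal_comp hintertwine fun x => √|x|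
  refine ⟨W, (mem_orthogonalGroup_iff' _ _).mpr hWW, ?_, ?_⟩
  · rw [hIpq, ← hWσ, Matrix.mul_assoc, mul_eq_one_comm.mp hWW, Matrix.mul_one]
  · rw [Matrix.mul_assoc, hWsqrt, ← Matrix.mul_assoc, ← hUXW]
end

section
/- For any unit vector a ∈ ℝ^d with d ≥ 2, there exists a vector z ∈ ℝ^d whose entries all have absolute value 1/√d such that |z^T a| ≤ √(2/3). -/
lemma exists_signs_sq_le : ∀ (n : ℕ) (a : Fin n → ℝ), ∃ ε : Fin n → ℝ,
    (∀ i, ε i = 1 ∨ ε i = -1) ∧ (∑ i, ε i * a i) ^ 2 ≤ ∑ i, (a i) ^ 2 := by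
  intro n
  induction n with
  | zero => intro a; exact ⟨fun _ => 1, fun i => i.elim0, by simp⟩
  | succ n ih =>
    intro a
    obtain ⟨ε, hε, hle⟩ := ih (fun i => a i.succ)
    set S := ∑ i, ε i * a i.succ with hS
    set e0 : ℝ := if S * a 0 ≤ 0 then 1 else -1 with he0
    refine ⟨Fin.cons e0 ε, ?_, ?_⟩
    · intro i
      refine Fin.cases ?_ (fun j => ?_) i
      · simp only [Fin.cons_zero, he0]; split <;> simp
      · simpa using hε j
    · rw [Fin.sum_univ_succ, Fin.sum_univ_succ]
      simp only [Fin.cons_zero, Fin.cons_succ, ← hS]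
      have h2 : e0 * (S * a 0) ≤ 0 := by
        rw [he0]; split
        · linarith
        · nlinarith
      have h3 : e0 ^ 2 = 1 := by rw [he0]; split <;> norm_num
      nlinarith

/-- For any unit vector `a ∈ ℝ^d`, `d ≥ 2`, there is a sign vector `z` with entries of absolute
value `1/√d` such that `|zᵀ a| ≤ √(2/3)`. -/
theorem exists_sign_vector_small_inner {d : ℕ} (hd : 2 ≤ d) (a : Fin d → ℝ)
    (ha : ∑ i, (a i) ^ 2 = 1) :
    ∃ z : Fin d → ℝ, (∀ i, |z i| = 1 / Real.sqrt d) ∧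
      |∑ i, z i * a i| ≤ Real.sqrt (2 / 3) := by
  obtain ⟨ε, hε, hle⟩ := exists_signs_sq_le d a
  rw [ha] at hle
  have hd0 : (0:ℝ) < Real.sqrt d := Real.sqrt_pos.2 (by positivity)
  refine ⟨fun i => ε i / Real.sqrt d, fun i => ?_, ?_⟩
  · rw [abs_div, abs_of_pos hd0]
    rcases hε i with h | h <;> rw [h] <;> norm_num
  · have hsum : ∑ i, ε i / Real.sqrt d * a i = (∑ i, ε i * a i) / Real.sqrt d := by
      rw [Finset.sum_div]; congr 1; ext i; ring
    rw [hsum, abs_div, abs_of_pos hd0]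
    have h1 : |∑ i, ε i * a i| ≤ 1 := by
      nlinarith [sq_abs (∑ i, ε i * a i), abs_nonneg (∑ i, ε i * a i)]
    have h2 : (1:ℝ) / Real.sqrt d ≤ Real.sqrt (2/3) := by
      rw [one_div, ← Real.sqrt_inv]
      apply Real.sqrt_le_sqrt
      have h : (d:ℝ) ≥ 2 := by exact_mod_cast hd
      calc (d:ℝ)⁻¹ ≤ ((3:ℝ)/2)⁻¹ := by gcongr; · norm_num; · linarith
        _ = 2/3 := by norm_num
    calc |∑ i, ε i * a i| / Real.sqrt d ≤ 1 / Real.sqrt d := by gcongr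
      _ ≤ Real.sqrt (2/3) := h2
end

section
/- If there exists a subset S ⊆ [d] with ‖a_S‖_2^2 ≤ 2/3 and ‖a_{S^c}‖_2^2 ≤ 2/3 for a unit vector a ∈ ℝ^d, then the sign vector z defined by z_ℓ = sign(a_ℓ)/√d for ℓ ∈ S and z_ℓ = -sign(a_ℓ)/√d otherwise satisfies |z^T a| ≤ √(2/3). -/
lemma real_sign_mul_self (x : ℝ) : Real.sign x * x = |x| := by
  rcases lt_trichotomy x 0 with h | h | h
  · rw [Real.sign_of_neg h, abs_of_neg h]; ring
  · simp [h]
  · rw [Real.sign_of_pos h, abs_of_pos h]; ring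

lemma abs_sum_le_sqrt {d : ℕ} (a : Fin d → ℝ) (s : Finset (Fin d))
    (h : ∑ i ∈ s, (a i) ^ 2 ≤ 2/3) :
    ∑ i ∈ s, |a i| ≤ Real.sqrt d * Real.sqrt (2/3) := by
  have h1 : (∑ i ∈ s, |a i|) ^ 2 ≤ (s.card : ℝ) * ∑ i ∈ s, |a i| ^ 2 :=
    sq_sum_le_card_mul_sum_sq
  have h2 : (∑ i ∈ s, |a i|) ^ 2 ≤ (d : ℝ) * (2/3) := by
    refine h1.trans ?_
    have hc : (s.card : ℝ) ≤ (d : ℝ) := by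
      exact_mod_cast (s.card_le_card (Finset.subset_univ s)).trans (by simp)
    have : ∑ i ∈ s, |a i| ^ 2 = ∑ i ∈ s, (a i) ^ 2 := by
      simp [sq_abs]
    rw [this]
    exact mul_le_mul hc h (Finset.sum_nonneg fun i _ => sq_nonneg _) (Nat.cast_nonneg d)
  have hnn : 0 ≤ ∑ i ∈ s, |a i| := Finset.sum_nonneg fun i _ => abs_nonneg _
  calc ∑ i ∈ s, |a i| = Real.sqrt ((∑ i ∈ s, |a i|) ^ 2) := by
        rw [Real.sqrt_sq hnn]
    _ ≤ Real.sqrt ((d : ℝ) * (2/3)) := Real.sqrt_le_sqrt h2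
    _ = Real.sqrt d * Real.sqrt (2/3) := Real.sqrt_mul (Nat.cast_nonneg d) _

/-- If a unit vector `a ∈ ℝ^d` admits a subset `S` of coordinates with
`‖a_S‖² ≤ 2/3` and `‖a_{Sᶜ}‖² ≤ 2/3`, then the sign vector `z` with
`z_ℓ = sign(a_ℓ)/√d` on `S` and `z_ℓ = -sign(a_ℓ)/√d` off `S` satisfies `|zᵀ a| ≤ √(2/3)`. -/
theorem sign_vector_inner_le_of_balanced_subset {d : ℕ} (a : Fin d → ℝ)
    (ha : ∑ i, (a i) ^ 2 = 1) (S : Finset (Fin d))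
    (hS : ∑ i ∈ S, (a i) ^ 2 ≤ 2 / 3) (hSc : ∑ i ∈ Sᶜ, (a i) ^ 2 ≤ 2 / 3) :
    |∑ i, (if i ∈ S then Real.sign (a i) / Real.sqrt d
            else -Real.sign (a i) / Real.sqrt d) * a i| ≤ Real.sqrt (2 / 3) := by
  rcases Nat.eq_zero_or_pos d with hd | hd
  · exfalso; subst hd; simpa using ha
  have hsd : (0:ℝ) < Real.sqrt d := Real.sqrt_pos.2 (by exact_mod_cast hd)
  have key : ∑ i, (if i ∈ S then Real.sign (a i) / Real.sqrt d
      else -Real.sign (a i) / Real.sqrt d) * a i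
      = (∑ i ∈ S, |a i| - ∑ i ∈ Sᶜ, |a i|) / Real.sqrt d := by
    rw [← Finset.sum_filter_add_sum_filter_not Finset.univ (· ∈ S)]
    simp only [Finset.filter_mem_eq_inter, Finset.univ_inter]
    rw [sub_div, Finset.sum_div, Finset.sum_div]
    congr 1
    · exact Finset.sum_congr rfl fun i hi => by
        rw [if_pos hi, div_mul_eq_mul_div, real_sign_mul_self]
    · rw [show Finset.univ.filter (fun i => ¬ i ∈ S) = Sᶜ by ext i; simp]
      rw [← Finset.sum_neg_distrib]
      exact Finset.sum_congr rfl fun i hi => by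
        rw [if_neg (by simpa using hi)]
        rw [neg_div, neg_mul, div_mul_eq_mul_div, real_sign_mul_self]
  rw [key, abs_div, abs_of_pos hsd, div_le_iff₀ hsd, mul_comm]
  have h1 := abs_sum_le_sqrt a S hS
  have h2 := abs_sum_le_sqrt a Sᶜ hSc
  have n1 : 0 ≤ ∑ i ∈ S, |a i| := Finset.sum_nonneg fun i _ => abs_nonneg _
  have n2 : 0 ≤ ∑ i ∈ Sᶜ, |a i| := Finset.sum_nonneg fun i _ => abs_nonneg _
  rw [abs_sub_le_iff]
  constructor <;> linarith
end

section
/- Let a ∈ ℝ^d be a unit vector with d ≥ 2 and suppose every entry satisfies a_ℓ^2 ≤ 1/3. Then there exists a subset T ⊆ [d] such that 1/3 ≤ ‖a_T‖_2^2 ≤ 2/3. -/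
/-- If `a ∈ ℝ^d` is a unit vector, `d ≥ 2`, whose entries all satisfy `a_ℓ² ≤ 1/3`, then some
subset `T` of coordinates satisfies `1/3 ≤ ‖a_T‖² ≤ 2/3`. -/
theorem exists_balanced_subset {d : ℕ} (hd : 2 ≤ d) (a : Fin d → ℝ)
    (ha : ∑ i, (a i) ^ 2 = 1) (hsmall : ∀ ℓ, (a ℓ) ^ 2 ≤ 1 / 3) :
    ∃ T : Finset (Fin d), 1 / 3 ≤ ∑ i ∈ T, (a i) ^ 2 ∧ ∑ i ∈ T, (a i) ^ 2 ≤ 2 / 3 := by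
  set S : ℕ → ℝ := fun k => ∑ i ∈ Finset.filter (fun i : Fin d => i.val < k) Finset.univ,
    (a i) ^ 2 with hS
  have hSd : S d = 1 := by
    have : Finset.filter (fun i : Fin d => i.val < d) Finset.univ = Finset.univ := by
      ext i; simp [i.isLt]
    simpa [hS, this] using ha
  have hex : ∃ k, 1 / 3 ≤ S k := ⟨d, by rw [hSd]; norm_num⟩
  classical
  let n := Nat.find hex
  have hn : 1 / 3 ≤ S n := Nat.find_spec hex
  have hstep : ∀ k, S (k + 1) ≤ S k + 1 / 3 := by
    intro k
    by_cases hk : k < d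
    · have hins : Finset.filter (fun i : Fin d => i.val < k + 1) Finset.univ =
        insert ⟨k, hk⟩ (Finset.filter (fun i : Fin d => i.val < k) Finset.univ) := by
        ext i
        simp only [Finset.mem_filter, Finset.mem_univ, true_and, Finset.mem_insert,
          Fin.ext_iff]
        omega
      have hnotmem : (⟨k, hk⟩ : Fin d) ∉
          Finset.filter (fun i : Fin d => i.val < k) Finset.univ := by simp
      rw [hS]
      simp only [hins, Finset.sum_insert hnotmem]
      have := hsmall ⟨k, hk⟩
      linarith
    · have heq : Finset.filter (fun i : Fin d => i.val < k + 1) Finset.univ =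
        Finset.filter (fun i : Fin d => i.val < k) Finset.univ := by
        ext i
        simp only [Finset.mem_filter, Finset.mem_univ, true_and]
        have := i.isLt; omega
      have h0 : (0:ℝ) ≤ 1/3 := by norm_num
      rw [hS]; simp only [heq]; linarith
  have hn0 : n ≠ 0 := by
    intro h
    have := hn
    rw [h] at this
    simp [hS] at this
    norm_num at this
  obtain ⟨m, hm⟩ := Nat.exists_eq_succ_of_ne_zero hn0
  have hlt : S m < 1 / 3 := by
    have := Nat.find_min hex (m := m) (by omega)
    push_neg at this; exact this
  refine ⟨Finset.filter (fun i : Fin d => i.val < n) Finset.univ, hn, ?_⟩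
  have := hstep m
  show S n ≤ 2/3
  rw [hm]
  simpa using by linarith
end

section
/- Let G = U_0 + e_i x^T where U_0 ∈ ℝ^{n×d} has orthonormal columns, e_i is a standard basis vector, u is the i-th row of U_0, and x ∈ ℝ^d is linearly independent from u with ‖x‖_2 < 1. Then the singular values of G are √(1+σ_+), √(1+σ_-), and 1 with multiplicity d-2, where σ_± = x^T u + ‖x‖_2^2 α_± and α_± = 1/2 ± (1/2)√(1 + (4‖u‖_2^2 + 4 x^T u)/‖x‖_2^2). Moreover 1 + σ_- > 0. -/
open Matrix Polynomial

private lemma eval_charpoly' {d : ℕ} (M : Matrix (Fin d) (Fin d) ℝ) (t : ℝ) :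
    (M.charpoly).eval t = (t • (1 : Matrix (Fin d) (Fin d) ℝ) - M).det := by
  rw [Matrix.charpoly, ← Polynomial.coe_evalRingHom, RingHom.map_det]
  congr 1
  ext j k
  by_cases h : j = k <;>
    simp [h, Matrix.charmatrix_apply, Matrix.one_apply, Matrix.diagonal_apply, Matrix.smul_apply]

set_option maxHeartbeats 2000000 in
/-- Singular values of the rank-one row perturbation `G = U₀ + eᵢ xᵀ` of a matrix `U₀` with
orthonormal columns: the characteristic polynomial of `Gᵀ G` is
`(X - (1+σ₊)) (X - (1+σ₋)) (X-1)^{d-2}`, so the singular values of `G` are `√(1+σ₊)`,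
`√(1+σ₋)` and `1` with multiplicity `d-2`; moreover `1 + σ₋ > 0`. -/
theorem charpoly_of_row_perturbation {n d : ℕ} (i : Fin n)
    (U₀ : Matrix (Fin n) (Fin d) ℝ) (x : Fin d → ℝ)
    (hU : U₀ᵀ * U₀ = 1)
    (hind : LinearIndependent ℝ ![x, U₀ i])
    (hx : Real.sqrt (∑ j, (x j) ^ 2) < 1) :
    ∀ ap am sp sm : ℝ,
      ap = 1 / 2 + (1 / 2) * Real.sqrt (1 +
            (4 * (∑ j, (U₀ i j) ^ 2) + 4 * ∑ j, x j * U₀ i j) / (∑ j, (x j) ^ 2)) →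
      am = 1 / 2 - (1 / 2) * Real.sqrt (1 +
            (4 * (∑ j, (U₀ i j) ^ 2) + 4 * ∑ j, x j * U₀ i j) / (∑ j, (x j) ^ 2)) →
      sp = (∑ j, x j * U₀ i j) + (∑ j, (x j) ^ 2) * ap →
      sm = (∑ j, x j * U₀ i j) + (∑ j, (x j) ^ 2) * am →
      ∀ G : Matrix (Fin n) (Fin d) ℝ,
        G = U₀ + Matrix.of (fun k j => if k = i then x j else 0) →
        (Gᵀ * G).charpoly =
          (X - C (1 + sp)) * (X - C (1 + sm)) * (X - C 1) ^ (d - 2) ∧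
        0 < 1 + sm := by
  have hd2 : 2 ≤ d := by
    have := hind.fintype_card_le_finrank
    simpa using this
  obtain ⟨e, rfl⟩ : ∃ e, d = e + 2 := ⟨d - 2, by omega⟩
  intro ap am sp sm hap ham hsp hsm G hG
  -- scalar abbreviations
  set ip : ℝ := ∑ j, x j * U₀ i j with hipdef
  set nx : ℝ := ∑ j, (x j)^2 with hnxdef
  set nu : ℝ := ∑ j, (U₀ i j)^2 with hnudef
  -- basic facts
  have hx0 : x ≠ 0 := by
    have := hind.ne_zero 0
    simpa using this
  have nx_pos : (0:ℝ) < nx := by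
    obtain ⟨j, hj⟩ : ∃ j, x j ≠ 0 := by
      by_contra h
      push_neg at h
      exact hx0 (funext h)
    have h1 : (0:ℝ) < (x j)^2 := by positivity
    exact Finset.sum_pos' (fun j _ => sq_nonneg _) ⟨j, Finset.mem_univ j, h1⟩
  have nx_lt_one : nx < 1 := by
    nlinarith [Real.sq_sqrt nx_pos.le, Real.sqrt_nonneg nx, hx]
  have nu_nonneg : (0:ℝ) ≤ nu := Finset.sum_nonneg fun j _ => sq_nonneg _
  have nu_le_one : nu ≤ 1 := by
    set P := U₀ * U₀ᵀ with hP
    have hPP : P * P = P := by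
      rw [hP, Matrix.mul_assoc, ← Matrix.mul_assoc U₀ᵀ, hU, Matrix.one_mul]
    have hsym : ∀ a b, P a b = P b a := by
      intro a b
      simp [hP, Matrix.mul_apply, mul_comm]
    have hPii : P i i = nu := by
      simp [hP, hnudef, Matrix.mul_apply, pow_two]
    have h1 : P i i = ∑ k, (P i k)^2 := by
      conv_lhs => rw [← hPP]
      rw [Matrix.mul_apply]
      exact Finset.sum_congr rfl fun k _ => by rw [hsym k i, pow_two]
    have h2 : (P i i)^2 ≤ ∑ k, (P i k)^2 :=
      Finset.single_le_sum (f := fun k => (P i k)^2) (fun k _ => sq_nonneg _) (Finset.mem_univ i)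
    nlinarith [h1, h2, hPii]
  have CS : ip^2 ≤ nx * nu :=
    Finset.sum_mul_sq_le_sq_mul_sq Finset.univ x (fun j => U₀ i j)
  -- discriminant
  set s : ℝ := Real.sqrt (1 + (4 * nu + 4 * ip) / nx) with hsdef
  have hsumsq : ∑ j, (x j + 2 * U₀ i j)^2 = nx + (4 * nu + 4 * ip) := by
    have : ∀ j : Fin (e+2), (x j + 2 * U₀ i j)^2
        = (x j)^2 + ((4:ℝ) * (U₀ i j)^2 + 4 * (x j * U₀ i j)) := fun j => by ring
    rw [Finset.sum_congr rfl fun j _ => this j, Finset.sum_add_distrib, Finset.sum_add_distrib,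
      ← Finset.mul_sum, ← Finset.mul_sum]
  have hDnn : (0:ℝ) ≤ 1 + (4 * nu + 4 * ip) / nx := by
    have h0 : (0:ℝ) ≤ nx + (4 * nu + 4 * ip) := by
      rw [← hsumsq]; exact Finset.sum_nonneg fun j _ => sq_nonneg _
    rw [le_add_iff_nonneg_left] at *
    have := div_nonneg (by linarith : (0:ℝ) ≤ nx + (4*nu+4*ip)) nx_pos.le
    rw [show (1:ℝ) + (4*nu+4*ip)/nx = (nx + (4*nu+4*ip))/nx by field_simp]
    exact div_nonneg h0 nx_pos.le
  have hs2 : s^2 = 1 + (4 * nu + 4 * ip) / nx := Real.sq_sqrt hDnn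
  have hs3 : nx * s^2 = nx + 4 * nu + 4 * ip := by
    rw [hs2]; field_simp; ring
  -- key symmetric functions
  have key1 : sp + sm = 2 * ip + nx := by rw [hsp, hsm, hap, ham]; ring
  have key2 : sp * sm = ip^2 - nx * nu := by
    rw [hsp, hsm, hap, ham]
    linear_combination (-(nx/4)) * hs3
  -- positivity
  have hip1 : ip^2 < 1 := by nlinarith
  have hsm_pos : 0 < 1 + sm := by nlinarith [key1, key2, sq_nonneg (1 + ip)]
  refine ⟨?_, hsm_pos⟩
  -- matrix setup
  set B : Matrix (Fin (e+2)) (Fin 2) ℝ :=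
    Matrix.of fun j (k : Fin 2) => if k = 0 then x j else U₀ i j with hB
  set C2 : Matrix (Fin 2) (Fin (e+2)) ℝ :=
    Matrix.of fun (k : Fin 2) j => if k = 0 then U₀ i j + x j else x j with hC
  have hM : Gᵀ * G = 1 + B * C2 := by
    subst hG
    ext j k
    have h1 : ∑ m, U₀ m j * U₀ m k = (1 : Matrix (Fin (e+2)) (Fin (e+2)) ℝ) j k := by
      rw [← hU]; simp [Matrix.mul_apply]
    simp only [Matrix.mul_apply, Matrix.transpose_apply, Matrix.add_apply, Matrix.of_apply]
    have expand : ∀ m : Fin n,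
        (U₀ m j + if m = i then x j else 0) * (U₀ m k + if m = i then x k else 0) =
        U₀ m j * U₀ m k + ((if m = i then U₀ m j * x k else 0) +
          ((if m = i then x j * U₀ m k else 0) + (if m = i then x j * x k else 0))) := by
      intro m
      by_cases h : m = i <;> simp [h] <;> ring
    rw [Finset.sum_congr rfl fun m _ => expand m]
    rw [Finset.sum_add_distrib, Finset.sum_add_distrib, Finset.sum_add_distrib]
    simp only [Finset.sum_ite_eq', Finset.mem_univ, if_true, h1]
    rw [Fin.sum_univ_two]
    simp [hB, hC, Matrix.one_apply]
    ring
  rw [hM]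
  -- characteristic polynomial via evaluation
  apply Polynomial.eq_of_infinite_eval_eq
  apply Set.Infinite.mono (s := Set.Ioi (1:ℝ)) _ (Set.Ioi_infinite 1)
  rintro t (ht : 1 < t)
  show _ = _
  obtain ⟨μ, hμ, rfl⟩ : ∃ μ : ℝ, 0 < μ ∧ t = μ + 1 := ⟨t - 1, by linarith, by ring⟩
  have hμne : μ ≠ 0 := hμ.ne'
  rw [eval_charpoly']
  -- determinant computation
  have hdet : ((μ+1) • (1 : Matrix (Fin (e+2)) (Fin (e+2)) ℝ) - (1 + B * C2)).det =
      μ^(e+2) * ((1 - μ⁻¹ * (ip + nx)) * (1 - μ⁻¹ * ip)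
        - (μ⁻¹ * (nu + ip)) * (μ⁻¹ * nx)) := by
    have hmat : (μ+1) • (1 : Matrix (Fin (e+2)) (Fin (e+2)) ℝ) - (1 + B * C2)
        = μ • ((1 : Matrix (Fin (e+2)) (Fin (e+2)) ℝ) - μ⁻¹ • (B * C2)) := by
      rw [smul_sub, smul_smul, mul_inv_cancel₀ hμne, one_smul, add_smul, one_smul]
      abel
    rw [hmat, Matrix.det_smul, Fintype.card_fin]
    congr 1
    rw [← Matrix.smul_mul, Matrix.det_one_sub_mul_comm, Matrix.det_fin_two]
    have entry : ∀ a b : Fin 2, (C2 * (μ⁻¹ • B)) a b = μ⁻¹ * ∑ j, C2 a j * B j b := by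
      intro a b
      rw [Matrix.mul_apply, Finset.mul_sum]
      exact Finset.sum_congr rfl fun j _ => by simp [Matrix.smul_apply]; ring
    have s00 : ∑ j, C2 0 j * B j 0 = ip + nx := by
      rw [hipdef, hnxdef, ← Finset.sum_add_distrib]
      exact Finset.sum_congr rfl fun j _ => by simp [hB, hC]; ring
    have s01 : ∑ j, C2 0 j * B j 1 = nu + ip := by
      rw [hipdef, hnudef, ← Finset.sum_add_distrib]
      exact Finset.sum_congr rfl fun j _ => by simp [hB, hC]; ring
    have s10 : ∑ j, C2 1 j * B j 0 = nx := by
      rw [hnxdef]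
      exact Finset.sum_congr rfl fun j _ => by simp [hB, hC]; ring
    have s11 : ∑ j, C2 1 j * B j 1 = ip := by
      rw [hipdef]
      exact Finset.sum_congr rfl fun j _ => by simp [hB, hC, mul_comm]
    simp only [Matrix.sub_apply, Matrix.one_apply, entry, s00, s01, s10, s11]
    norm_num
  rw [hdet]
  -- evaluate the RHS polynomial and finish with algebra
  have hquad : ((μ+1) - (1+sp)) * ((μ+1) - (1+sm))
      = μ^2 - (2*ip + nx)*μ + (ip^2 - nx*nu) := by
    linear_combination (-μ) * key1 + key2
  simp only [eval_mul, eval_pow, eval_sub, eval_X, eval_C]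
  rw [hquad, show e + 2 - 2 = e from rfl]
  field_simp
  ring
end

section
/- With G = U_0 + e_i x^T as above, having singular values √(1+σ_+), √(1+σ_-), 1,...,1, the diagonal matrix Σ of singular values satisfies ‖Σ - I_d‖ ≤ (1/2)‖x‖_2^2 + 2‖u‖_2 ‖x‖_2, where u is the i-th row of U_0, provided ‖x‖_2 < 1 and x^T u ≥ 0. -/
open Matrix

/-- For `G = U₀ + eᵢ xᵀ` with `U₀` having orthonormal columns, `‖x‖₂ < 1` and `xᵀu ≥ 0` where
`u` is the `i`-th row of `U₀`, every singular value `√t` of `G` (i.e. every `t` with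
`det(GᵀG - t I) = 0`) satisfies `|√t - 1| ≤ ‖x‖₂²/2 + 2 ‖u‖₂ ‖x‖₂`; equivalently the diagonal
matrix `Σ` of singular values satisfies `‖Σ - I‖ ≤ ‖x‖₂²/2 + 2 ‖u‖₂ ‖x‖₂`. -/
theorem singular_values_close_to_one {n d : ℕ} (i : Fin n)
    (U₀ : Matrix (Fin n) (Fin d) ℝ) (x : Fin d → ℝ)
    (hU : U₀ᵀ * U₀ = 1)
    (hx : Real.sqrt (∑ j, (x j) ^ 2) < 1)
    (hxu : 0 ≤ ∑ j, x j * U₀ i j) :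
    ∀ G : Matrix (Fin n) (Fin d) ℝ,
      G = U₀ + Matrix.of (fun k j => if k = i then x j else 0) →
      ∀ t : ℝ, (Gᵀ * G - t • (1 : Matrix (Fin d) (Fin d) ℝ)).det = 0 →
        |Real.sqrt t - 1| ≤
          (1 / 2) * (∑ j, (x j) ^ 2) +
            2 * Real.sqrt (∑ j, (U₀ i j) ^ 2) * Real.sqrt (∑ j, (x j) ^ 2) := by
  intro G hG t hdet
  obtain ⟨v, hv0, hveq⟩ := Matrix.exists_mulVec_eq_zero_iff.mpr hdet
  rw [Matrix.sub_mulVec, Matrix.smul_mulVec, Matrix.one_mulVec, sub_eq_zero] at hveq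
  set sx : ℝ := ∑ j, x j ^ 2 with hsx
  set su : ℝ := ∑ j, U₀ i j ^ 2 with hsu
  set s : ℝ := Real.sqrt sx with hs
  set nu : ℝ := Real.sqrt su with hnu
  set p : ℝ := ∑ j, x j * v j with hp
  set q : ℝ := ∑ j, U₀ i j * v j with hq
  set V : ℝ := ∑ j, v j ^ 2 with hV
  have hsx0 : 0 ≤ sx := by rw [hsx]; exact Finset.sum_nonneg fun j _ => sq_nonneg _
  have hsu0 : 0 ≤ su := by rw [hsu]; exact Finset.sum_nonneg fun j _ => sq_nonneg _
  have hs0 : 0 ≤ s := Real.sqrt_nonneg _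
  have hnu0 : 0 ≤ nu := Real.sqrt_nonneg _
  have hs2 : s ^ 2 = sx := Real.sq_sqrt hsx0
  have hnu2 : nu ^ 2 = su := Real.sq_sqrt hsu0
  have hVpos : 0 < V := by
    have hex : ∃ j, v j ≠ 0 := by
      by_contra h
      push_neg at h
      exact hv0 (funext h)
    obtain ⟨j, hj⟩ := hex
    rw [hV]
    exact Finset.sum_pos' (fun k _ => sq_nonneg _)
      ⟨j, Finset.mem_univ j, by positivity⟩
  -- entries of GᵀG
  have hGtG : ∀ j k, (Gᵀ * G) j k =
      (if j = k then (1:ℝ) else 0) + (x j * U₀ i k + U₀ i j * x k + x j * x k) := by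
    intro j k
    have h1 : (if j = k then (1:ℝ) else 0) = ∑ m, U₀ m j * U₀ m k := by
      have : (∑ m, U₀ m j * U₀ m k) = (U₀ᵀ * U₀) j k := by
        simp [Matrix.mul_apply, Matrix.transpose_apply]
      rw [this, hU]
      simp [Matrix.one_apply]
    subst hG
    simp only [Matrix.mul_apply, Matrix.transpose_apply, Matrix.add_apply, Matrix.of_apply]
    rw [h1]
    have hexp : ∀ m, (U₀ m j + if m = i then x j else 0) * (U₀ m k + if m = i then x k else 0)
        = U₀ m j * U₀ m k + ((if m = i then x j * U₀ i k else 0)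
            + ((if m = i then U₀ i j * x k else 0) + (if m = i then x j * x k else 0))) := by
      intro m
      by_cases h : m = i <;> simp [h] <;> ring
    rw [Finset.sum_congr rfl fun m _ => hexp m, Finset.sum_add_distrib]
    congr 1
    rw [Finset.sum_add_distrib, Finset.sum_add_distrib]
    simp
    ring
  -- eigenvector equation per coordinate
  have eqj : ∀ j, v j + (x j * q + U₀ i j * p + x j * p) = t * v j := by
    intro j
    have h := congrFun hveq j
    rw [show ((Gᵀ * G) *ᵥ v) j = ∑ k, (Gᵀ * G) j k * v k from rfl] at h
    rw [show (t • v) j = t * v j from rfl] at h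
    have hvj : v j = ∑ k, (if j = k then (1:ℝ) else 0) * v k := by simp
    rw [← h, hvj, hp, hq, Finset.mul_sum, Finset.mul_sum, Finset.mul_sum]
    simp only [← Finset.sum_add_distrib]
    apply Finset.sum_congr rfl
    intro k _
    rw [hGtG j k]
    ring
  -- main identity
  have hmain : t * V = V + (2 * p * q + p ^ 2) := by
    have hsum : ∑ j, (t * v j) * v j = ∑ j, (v j + (x j * q + U₀ i j * p + x j * p)) * v j :=
      Finset.sum_congr rfl fun j _ => by rw [eqj j]
    calc t * V = ∑ j, (t * v j) * v j := by
          rw [hV, Finset.mul_sum]; exact Finset.sum_congr rfl fun j _ => by ring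
      _ = ∑ j, (v j ^ 2 + (x j * v j * q + (U₀ i j * v j * p + x j * v j * p))) := by
          rw [hsum]; exact Finset.sum_congr rfl fun j _ => by ring
      _ = V + (2 * p * q + p ^ 2) := by
          simp only [Finset.sum_add_distrib, ← Finset.sum_mul]
          rw [← hV, ← hp, ← hq]
          ring
  -- Cauchy–Schwarz
  have hcs1 : p ^ 2 ≤ sx * V := Finset.sum_mul_sq_le_sq_mul_sq Finset.univ x v
  have hcs2 : q ^ 2 ≤ su * V := Finset.sum_mul_sq_le_sq_mul_sq Finset.univ (fun j => U₀ i j) v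
  clear_value sx su s nu p q V
  clear hveq hdet hGtG eqj hv0 hG hx hxu hU hsx hsu hs hnu hp hq hV
  have hpq : |p * q| ≤ s * nu * V := by
    have h1 : (p * q) ^ 2 ≤ (s * nu * V) ^ 2 := by
      have h2 := mul_le_mul hcs1 hcs2 (sq_nonneg q) (by positivity)
      calc (p*q)^2 = p^2 * q^2 := by ring
        _ ≤ (sx * V) * (su * V) := h2
        _ = (s * nu * V)^2 := by rw [← hs2, ← hnu2]; ring
    have h2 : 0 ≤ s * nu * V := by positivity
    calc |p * q| = Real.sqrt ((p*q)^2) := (Real.sqrt_sq_eq_abs _).symm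
      _ ≤ Real.sqrt ((s * nu * V)^2) := Real.sqrt_le_sqrt h1
      _ = s * nu * V := Real.sqrt_sq h2
  -- bounds on t
  have hub : t ≤ 1 + (2 * s * nu + sx) := by
    have h3 : (t - 1) * V ≤ (2 * s * nu + sx) * V := by
      have h1 : 2 * p * q ≤ 2 * (s * nu * V) := by nlinarith [le_abs_self (p*q)]
      nlinarith [hcs1]
    nlinarith [hVpos]
  have hlb : 1 - 2 * s * nu ≤ t := by
    have h3 : (-(2 * s * nu)) * V ≤ (t - 1) * V := by
      have h1 : -(2 * (s * nu * V)) ≤ 2 * p * q := by nlinarith [neg_abs_le (p*q)]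
      nlinarith [sq_nonneg p]
    nlinarith [hVpos]
  -- conclude
  have hB0 : 0 ≤ 1/2 * sx + 2 * nu * s := by positivity
  rw [abs_sub_le_iff]
  constructor
  · have h1 : t ≤ (1 + (1/2 * sx + 2 * nu * s)) ^ 2 := by nlinarith
    have h2 : Real.sqrt t ≤ 1 + (1/2 * sx + 2 * nu * s) := by
      calc Real.sqrt t ≤ Real.sqrt ((1 + (1/2 * sx + 2 * nu * s))^2) := Real.sqrt_le_sqrt h1
        _ = 1 + (1/2 * sx + 2 * nu * s) := Real.sqrt_sq (by linarith)
    linarith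
  · rcases le_or_gt 1 (1/2 * sx + 2 * nu * s) with h | h
    · have := Real.sqrt_nonneg t
      linarith
    · have h1 : (1 - (1/2 * sx + 2 * nu * s)) ^ 2 ≤ t := by nlinarith
      have h2 : 1 - (1/2 * sx + 2 * nu * s) ≤ Real.sqrt t := by
        calc (1:ℝ) - (1/2 * sx + 2 * nu * s)
            = Real.sqrt ((1 - (1/2 * sx + 2 * nu * s))^2) := (Real.sqrt_sq (by linarith)).symm
          _ ≤ Real.sqrt t := Real.sqrt_le_sqrt h1
      linarith
end

section
/- Let U_0 ∈ ℝ^{n×d} have orthonormal columns with ‖U_0‖_{2,∞} ≤ √(d/(n-r)) for some 0 ≤ r < n-d, let x ∈ ℝ^d satisfy ‖x‖_2 < 1, and let Ũ ∈ ℝ^{n×d} be the matrix of leading d left singular vectors of U_0 + e_i x^T. Then ‖Ũ‖_{2,∞} ≤ √(d/(n-r) + ‖x‖_2/(1-‖x‖_2)). -/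
/-!
Write `P = Ut Utᵀ` and `Q = U₀ U₀ᵀ`, so that the squared row norms of `Ut` and `U₀` are the
diagonal entries of these projections, and let `t = ‖x‖₂`, `ε = t / (1 - t)`. It suffices to show
`P k k ≤ Q k k + ε`. Since `P - Q = P (1 - Q) - (1 - P) Q` and the two terms have orthogonal
columns, it is enough to bound the `k`-th columns of both blocks. The matrix `G = U₀ + eᵢ xᵀ` is
bounded below by `1 - t`, so its columns span the range of `P`, `P = G (GᵀG)⁻¹ Gᵀ`, and
`P (1 - Q) = w eᵢᵀ (1 - Q)` with `w = G (GᵀG)⁻¹ x` of norm at most `ε`. On the other side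
`(1 - P) G = 0` gives `(1 - P) Q = -(1 - P) eᵢ (U₀ x)ᵀ`. Together the `k`-th column of `P - Q` has
squared norm at most `ε² (1 - Q k k) + t² Q k k ≤ ε²`.
-/

open Matrix

/-- The two-to-infinity norm of a matrix: the maximum Euclidean norm of a row. -/
noncomputable def tti {n d : ℕ} (A : Matrix (Fin n) (Fin d) ℝ) : ℝ :=
  ⨆ i : Fin n, Real.sqrt (∑ j, (A i j) ^ 2)

theorem mul_transpose_self_apply_self {m d : Type*} [Fintype d] (A : Matrix m d ℝ) (k : m) :
    (A * Aᵀ) k k = ∑ j, A k j ^ 2 := by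
  simp [mul_apply, sq]

variable {m d : Type*} [Fintype m] [Fintype d]

theorem sqrt_sum_sq_eq_norm (v : m → ℝ) : √(∑ j, v j ^ 2) = ‖WithLp.toLp 2 v‖ := by
  simp [EuclideanSpace.norm_eq]

theorem abs_dotProduct_le (v w : m → ℝ) :
    |v ⬝ᵥ w| ≤ √(∑ j, v j ^ 2) * √(∑ j, w j ^ 2) :=
  (Real.abs_le_sqrt (Finset.sum_mul_sq_le_sq_mul_sq _ v w)).trans_eq
    (Real.sqrt_mul (by positivity) _)

theorem sqrt_sum_sq_sub_le (a b : m → ℝ) :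
    √(∑ j, a j ^ 2) - √(∑ j, b j ^ 2) ≤ √(∑ j, (a + b) j ^ 2) := by
  simp only [sqrt_sum_sq_eq_norm, WithLp.toLp_add]
  have := norm_sub_le (WithLp.toLp 2 a + WithLp.toLp 2 b) (WithLp.toLp 2 b)
  rw [add_sub_cancel_right] at this
  linarith

theorem le_sqrt_sum_sq (v : m → ℝ) (k : m) : v k ≤ √(∑ j, v j ^ 2) :=
  Real.le_sqrt_of_sq_le
    (Finset.single_le_sum (f := fun j => v j ^ 2) (fun _ _ => sq_nonneg _) (Finset.mem_univ k))

theorem sum_sq_mulVec (A : Matrix m d ℝ) (v : d → ℝ) :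
    ∑ l, (A *ᵥ v) l ^ 2 = v ⬝ᵥ (Aᵀ * A) *ᵥ v := by
  rw [← mulVec_mulVec, dotProduct_mulVec, vecMul_transpose]
  simp [dotProduct, sq]

namespace IsStarProjection

variable {P Q : Matrix m m ℝ}

theorem transpose_eq (hP : IsStarProjection P) : Pᵀ = P := by
  have := hP.isSelfAdjoint.star_eq
  rwa [star_eq_conjTranspose, conjTranspose_eq_transpose_of_trivial] at this

theorem sum_sq_apply_left (hP : IsStarProjection P) (k : m) : ∑ l, P l k ^ 2 = P k k := by
  conv_rhs => rw [← hP.isIdempotentElem.eq, mul_apply]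
  refine Finset.sum_congr rfl fun l _ => ?_
  rw [sq, ← transpose_apply P l k, hP.transpose_eq]

theorem sum_sq_apply_right (hP : IsStarProjection P) (k : m) : ∑ l, P k l ^ 2 = P k k := by
  refine (Finset.sum_congr rfl fun l _ => ?_).trans (hP.sum_sq_apply_left k)
  exact congrArg (· ^ 2) (congrFun (congrFun hP.transpose_eq l) k)

theorem apply_self_nonneg (hP : IsStarProjection P) (k : m) : 0 ≤ P k k := by
  rw [← hP.sum_sq_apply_left k]
  positivity

theorem apply_self_le_one (hP : IsStarProjection P) (k : m) : P k k ≤ 1 := by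
  have := Finset.single_le_sum (f := fun l => P l k ^ 2) (fun l _ => sq_nonneg _)
    (Finset.mem_univ k)
  rw [hP.sum_sq_apply_left] at this
  nlinarith

theorem sq_apply_le_mul_apply_self (hP : IsStarProjection P) (i k : m) :
    P i k ^ 2 ≤ P i i * P k k := by
  have hcs := Finset.sum_mul_sq_le_sq_mul_sq Finset.univ (fun l => P i l) (fun l => P l k)
  rwa [← mul_apply, hP.isIdempotentElem.eq, hP.sum_sq_apply_right, hP.sum_sq_apply_left] at hcs

variable [DecidableEq m]

theorem sum_sq_sub_apply_left (hP : IsStarProjection P) (hQ : IsStarProjection Q) (k : m) :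
    ∑ l, (P - Q) l k ^ 2 = ∑ l, (P * (1 - Q)) l k ^ 2 + ∑ l, ((1 - P) * Q) l k ^ 2 := by
  have hsplit : P - Q = P * (1 - Q) - (1 - P) * Q := by noncomm_ring
  have hcross : (P * (1 - Q))ᵀ * ((1 - P) * Q) = 0 := by
    rw [transpose_mul, transpose_sub, transpose_one, hP.transpose_eq, hQ.transpose_eq,
      Matrix.mul_assoc, ← Matrix.mul_assoc P, hP.mul_one_sub_self, Matrix.zero_mul,
      Matrix.mul_zero]
  have hcross_k : ∑ l, (P * (1 - Q)) l k * ((1 - P) * Q) l k = 0 := by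
    have := congrFun (congrFun hcross k) k
    rw [mul_apply] at this
    simpa only [transpose_apply, Matrix.zero_apply] using this
  rw [hsplit]
  simp only [Matrix.sub_apply, sub_sq, Finset.sum_add_distrib, Finset.sum_sub_distrib,
    mul_assoc, ← Finset.mul_sum, hcross_k]
  ring

theorem apply_self_sub_le (hP : IsStarProjection P) (hQ : IsStarProjection Q) {ε : ℝ}
    (hε : 0 ≤ ε) (k : m) (hPQ : ∑ l, (P * (1 - Q)) l k ^ 2 ≤ ε ^ 2 * (1 - Q k k))
    (hQP : ∑ l, ((1 - P) * Q) l k ^ 2 ≤ ε ^ 2 * Q k k) :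
    P k k ≤ Q k k + ε := by
  have hcol : ∑ l, (P - Q) l k ^ 2 ≤ ε ^ 2 := by
    rw [hP.sum_sq_sub_apply_left hQ k]
    linarith
  have := (le_sqrt_sum_sq (fun l => (P - Q) l k) k).trans
    ((Real.sqrt_le_sqrt hcol).trans_eq (Real.sqrt_sq hε))
  simp only [Matrix.sub_apply] at this
  linarith

end IsStarProjection

theorem isStarProjection_mul_transpose_self [DecidableEq d] {U : Matrix m d ℝ}
    (hU : Uᵀ * U = 1) : IsStarProjection (U * Uᵀ) where
  isIdempotentElem := by
    rw [IsIdempotentElem, Matrix.mul_assoc, ← Matrix.mul_assoc Uᵀ, hU, Matrix.one_mul]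
  isSelfAdjoint := by
    simp [IsSelfAdjoint, star_eq_conjTranspose, conjTranspose_eq_transpose_of_trivial]

theorem sum_sq_vecMulVec_apply {n : Type*} (w : m → ℝ) (b : n → ℝ) (k : n) :
    ∑ l, vecMulVec w b l k ^ 2 = (∑ l, w l ^ 2) * b k ^ 2 := by
  simp [vecMulVec_apply, mul_pow, Finset.sum_mul]

theorem sum_sq_mulVec_of_transpose_mul_self_eq_one [DecidableEq d] {U : Matrix m d ℝ}
    (hU : Uᵀ * U = 1) (v : d → ℝ) : ∑ l, (U *ᵥ v) l ^ 2 = ∑ j, v j ^ 2 := by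
  rw [sum_sq_mulVec, hU, one_mulVec]
  simp only [dotProduct, sq]

theorem one_sub_sqrt_mul_le_sqrt_sum_sq_mulVec [DecidableEq m] [DecidableEq d]
    {U : Matrix m d ℝ} (hU : Uᵀ * U = 1) (i : m) (x v : d → ℝ) :
    (1 - √(∑ j, x j ^ 2)) * √(∑ j, v j ^ 2) ≤
      √(∑ l, ((U + vecMulVec (Pi.single i 1) x) *ᵥ v) l ^ 2) := by
  have htri := sqrt_sum_sq_sub_le (U *ᵥ v) (vecMulVec (Pi.single i 1) x *ᵥ v)
  have hpert : ∑ l, (vecMulVec (Pi.single i 1) x *ᵥ v) l ^ 2 = (x ⬝ᵥ v) ^ 2 := by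
    simp [vecMulVec_mulVec, Pi.single_apply]
  rw [← add_mulVec, sum_sq_mulVec_of_transpose_mul_self_eq_one hU, hpert,
    Real.sqrt_sq_eq_abs] at htri
  have := abs_dotProduct_le x v
  linarith

section Gram

variable {A : Matrix m d ℝ} {c : ℝ}

theorem injective_mulVec_of_mul_sqrt_sum_sq_le (hc : 0 < c)
    (hA : ∀ v, c * √(∑ j, v j ^ 2) ≤ √(∑ l, (A *ᵥ v) l ^ 2)) : Function.Injective A.mulVec := by
  intro v w hvw
  have h := hA (v - w)
  rw [mulVec_sub, hvw, sub_self, sqrt_sum_sq_eq_norm, sqrt_sum_sq_eq_norm, WithLp.toLp_zero,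
    norm_zero] at h
  have hvw0 : ‖WithLp.toLp 2 (v - w)‖ = 0 :=
    le_antisymm (nonpos_of_mul_nonpos_right h hc) (norm_nonneg _)
  rw [norm_eq_zero, WithLp.toLp_eq_zero] at hvw0
  exact sub_eq_zero.mp hvw0

variable [DecidableEq d]

theorem isUnit_transpose_mul_self_of_mul_sqrt_sum_sq_le (hc : 0 < c)
    (hA : ∀ v, c * √(∑ j, v j ^ 2) ≤ √(∑ l, (A *ᵥ v) l ^ 2)) : IsUnit (Aᵀ * A) := by
  simpa only [conjTranspose_eq_transpose_of_trivial] using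
    (PosDef.conjTranspose_mul_self A (injective_mulVec_of_mul_sqrt_sum_sq_le hc hA)).isUnit

-- `A (AᵀA)⁻¹` is the transposed pseudo-inverse of `A`, and `c` bounds the least singular value.
theorem sqrt_sum_sq_mulVec_inv_le (hc : 0 < c)
    (hA : ∀ v, c * √(∑ j, v j ^ 2) ≤ √(∑ l, (A *ᵥ v) l ^ 2)) (x : d → ℝ) :
    √(∑ l, (A *ᵥ ((Aᵀ * A)⁻¹ *ᵥ x)) l ^ 2) ≤ √(∑ j, x j ^ 2) / c := by
  set z := (Aᵀ * A)⁻¹ *ᵥ x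
  have hz : (Aᵀ * A) *ᵥ z = x := by
    have hAA := isUnit_transpose_mul_self_of_mul_sqrt_sum_sq_le hc hA
    rw [mulVec_mulVec, mul_nonsing_inv _ ((isUnit_iff_isUnit_det _).mp hAA), one_mulVec]
  have hsq : √(∑ l, (A *ᵥ z) l ^ 2) ^ 2 ≤ √(∑ j, z j ^ 2) * √(∑ j, x j ^ 2) := by
    rw [Real.sq_sqrt (by positivity), sum_sq_mulVec, hz]
    exact (le_abs_self _).trans (abs_dotProduct_le z x)
  have hlow := hA z
  rw [le_div_iff₀ hc]
  rcases (Real.sqrt_nonneg (∑ l, (A *ᵥ z) l ^ 2)).eq_or_lt with h0 | hpos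
  · rw [← h0, zero_mul]
    positivity
  · have key : √(∑ l, (A *ᵥ z) l ^ 2) * (√(∑ l, (A *ᵥ z) l ^ 2) * c) ≤
        √(∑ l, (A *ᵥ z) l ^ 2) * √(∑ j, x j ^ 2) := by
      nlinarith [mul_le_mul_of_nonneg_right hlow (Real.sqrt_nonneg (∑ j, x j ^ 2))]
    exact le_of_mul_le_mul_left key hpos

end Gram

theorem mul_transpose_self_eq_of_mul_eq [DecidableEq d] {Ut G : Matrix m d ℝ}
    (hUt : Utᵀ * Ut = 1) (hG : Ut * Utᵀ * G = G) (hGG : IsUnit (Gᵀ * G)) :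
    Ut * Utᵀ = G * (Gᵀ * G)⁻¹ * Gᵀ := by
  set R := Utᵀ * G
  have hGR : G = Ut * R := by rw [← Matrix.mul_assoc, hG]
  have hGG_eq : Gᵀ * G = Rᵀ * R := by
    rw [hGR, transpose_mul, Matrix.mul_assoc, ← Matrix.mul_assoc Utᵀ, hUt, Matrix.one_mul]
  have hR : IsUnit R.det := by
    rw [hGG_eq, isUnit_iff_isUnit_det, det_mul, det_transpose] at hGG
    exact (IsUnit.mul_iff.mp hGG).1
  have hUtGR : Ut = G * R⁻¹ := by
    rw [hGR, Matrix.mul_assoc, mul_nonsing_inv R hR, Matrix.mul_one]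
  rw [hGG_eq, Matrix.mul_inv_rev, hUtGR, transpose_mul, transpose_nonsing_inv]
  simp only [Matrix.mul_assoc]

theorem one_sub_mul_mul_transpose_self_eq {P : Matrix m m ℝ} [DecidableEq m] {U : Matrix m d ℝ}
    {a : m → ℝ} {x : d → ℝ} (h : P * (U + vecMulVec a x) = U + vecMulVec a x) :
    (1 - P) * (U * Uᵀ) = -vecMulVec ((1 - P) *ᵥ a) (U *ᵥ x) := by
  have h0 : (1 - P) * (U + vecMulVec a x) = 0 := by rw [Matrix.sub_mul, Matrix.one_mul, h, sub_self]
  rw [Matrix.mul_add, add_eq_zero_iff_eq_neg] at h0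
  rw [← Matrix.mul_assoc, h0, Matrix.neg_mul, mul_vecMulVec, vecMulVec_mul, vecMul_transpose]

theorem mul_mul_transpose_mul_one_sub_eq [DecidableEq m] [DecidableEq d] {U : Matrix m d ℝ}
    (hU : Uᵀ * U = 1) (B : Matrix d d ℝ) (a : m → ℝ) (x : d → ℝ) :
    (U + vecMulVec a x) * B * (U + vecMulVec a x)ᵀ * (1 - U * Uᵀ) =
      vecMulVec ((U + vecMulVec a x) *ᵥ (B *ᵥ x)) (a ᵥ* (1 - U * Uᵀ)) := by
  have hU0 : Uᵀ * (1 - U * Uᵀ) = 0 := by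
    rw [Matrix.mul_sub, Matrix.mul_one, ← Matrix.mul_assoc, hU, Matrix.one_mul, sub_self]
  rw [Matrix.mul_assoc, transpose_add, Matrix.add_mul Uᵀ, hU0, zero_add, transpose_vecMulVec,
    vecMulVec_mul, mul_vecMulVec, mulVec_mulVec]

section RankOnePerturbation

variable [DecidableEq m] [DecidableEq d] {U₀ Ut : Matrix m d ℝ} {i : m} {x : d → ℝ}

theorem sum_sq_mul_one_sub_apply_le (hU : U₀ᵀ * U₀ = 1) (hUt : Utᵀ * Ut = 1)
    (hx : √(∑ j, x j ^ 2) < 1)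
    (hspan : Ut * Utᵀ * (U₀ + vecMulVec (Pi.single i 1) x) = U₀ + vecMulVec (Pi.single i 1) x)
    (k : m) :
    ∑ l, (Ut * Utᵀ * (1 - U₀ * U₀ᵀ) : Matrix m m ℝ) l k ^ 2 ≤
      (√(∑ j, x j ^ 2) / (1 - √(∑ j, x j ^ 2))) ^ 2 * (1 - (U₀ * U₀ᵀ) k k) := by
  have h1t : 0 < 1 - √(∑ j, x j ^ 2) := sub_pos.mpr hx
  have hlow := one_sub_sqrt_mul_le_sqrt_sum_sq_mulVec hU i x
  rw [mul_transpose_self_eq_of_mul_eq hUt hspan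
      (isUnit_transpose_mul_self_of_mul_sqrt_sum_sq_le h1t hlow),
    mul_mul_transpose_mul_one_sub_eq hU, sum_sq_vecMulVec_apply, single_one_vecMul, row_apply]
  have hw := (Real.sqrt_le_iff.mp (sqrt_sum_sq_mulVec_inv_le h1t hlow x)).2
  set Q : Matrix m m ℝ := U₀ * U₀ᵀ
  have hQc := (isStarProjection_mul_transpose_self hU).one_sub
  have hik : (1 - Q) i k ^ 2 ≤ 1 - Q k k :=
    calc (1 - Q) i k ^ 2 ≤ (1 - Q) i i * (1 - Q) k k := hQc.sq_apply_le_mul_apply_self i k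
      _ ≤ 1 * (1 - Q) k k :=
          mul_le_mul_of_nonneg_right (hQc.apply_self_le_one i) (hQc.apply_self_nonneg k)
      _ = 1 - Q k k := by rw [one_mul, Matrix.sub_apply, one_apply_eq]
  exact mul_le_mul hw hik (sq_nonneg _) (sq_nonneg _)

theorem sum_sq_one_sub_mul_apply_le (hUt : Utᵀ * Ut = 1)
    (hspan : Ut * Utᵀ * (U₀ + vecMulVec (Pi.single i 1) x) = U₀ + vecMulVec (Pi.single i 1) x)
    (k : m) :
    ∑ l, ((1 - Ut * Utᵀ) * (U₀ * U₀ᵀ) : Matrix m m ℝ) l k ^ 2 ≤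
      (∑ j, x j ^ 2) * (U₀ * U₀ᵀ) k k := by
  have hPc := (isStarProjection_mul_transpose_self hUt).one_sub
  simp only [one_sub_mul_mul_transpose_self_eq hspan, Matrix.neg_apply, neg_sq,
    sum_sq_vecMulVec_apply, mulVec_single_one, col_apply, hPc.sum_sq_apply_left,
    mul_transpose_self_apply_self]
  calc (1 - Ut * Utᵀ : Matrix m m ℝ) i i * (U₀ *ᵥ x) k ^ 2
        ≤ 1 * ((∑ j, U₀ k j ^ 2) * ∑ j, x j ^ 2) :=
        mul_le_mul (hPc.apply_self_le_one i) (Finset.sum_mul_sq_le_sq_mul_sq _ _ _)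
          (sq_nonneg _) zero_le_one
    _ = (∑ j, x j ^ 2) * ∑ j, U₀ k j ^ 2 := by ring

theorem mul_transpose_self_apply_self_le (hU : U₀ᵀ * U₀ = 1) (hUt : Utᵀ * Ut = 1)
    (hx : √(∑ j, x j ^ 2) < 1)
    (hspan : Ut * Utᵀ * (U₀ + vecMulVec (Pi.single i 1) x) = U₀ + vecMulVec (Pi.single i 1) x)
    (k : m) :
    (Ut * Utᵀ) k k ≤ (U₀ * U₀ᵀ) k k + √(∑ j, x j ^ 2) / (1 - √(∑ j, x j ^ 2)) := by
  set t := √(∑ j, x j ^ 2)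
  have ht0 : 0 ≤ t := Real.sqrt_nonneg _
  have h1t : 0 < 1 - t := sub_pos.mpr hx
  have htε : t ≤ t / (1 - t) := le_div_self ht0 h1t (by linarith)
  have hQ := isStarProjection_mul_transpose_self hU
  refine (isStarProjection_mul_transpose_self hUt).apply_self_sub_le hQ (by positivity) k
    (sum_sq_mul_one_sub_apply_le hU hUt hx hspan k) ?_
  calc ∑ l, ((1 - Ut * Utᵀ) * (U₀ * U₀ᵀ) : Matrix m m ℝ) l k ^ 2 ≤ t ^ 2 * (U₀ * U₀ᵀ) k k := by
        rw [Real.sq_sqrt (by positivity)]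
        exact sum_sq_one_sub_mul_apply_le hUt hspan k
    _ ≤ (t / (1 - t)) ^ 2 * (U₀ * U₀ᵀ) k k := by
        gcongr
        exact hQ.apply_self_nonneg k

end RankOnePerturbation

-- As `G = U₀ + eᵢ xᵀ` has rank `d`, its leading `d` left singular vectors span its column space,
-- which is what `hUt` and `hspan` pin down.
/-- Two-to-infinity bound on the leading left singular subspace of `U₀ + eᵢ xᵀ`: if `U₀` has
orthonormal columns with `‖U₀‖_{2,∞} ≤ √(d/(n-r))`, `‖x‖₂ < 1`, and `Ut` is a matrix whose
columns are an orthonormal basis of the leading (rank-`d`) left singular subspace of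
`G = U₀ + eᵢ xᵀ` (i.e. `UtᵀUt = I` and the column space of `G` is contained in that of `Ut`),
then `‖Ut‖_{2,∞} ≤ √(d/(n-r) + ‖x‖₂/(1-‖x‖₂))`. -/
theorem tti_leading_singular_subspace {n d r : ℕ} (hr : r < n - d) (i : Fin n)
    (U₀ Ut : Matrix (Fin n) (Fin d) ℝ) (x : Fin d → ℝ)
    (hU : U₀ᵀ * U₀ = 1)
    (hU0tti : tti U₀ ≤ Real.sqrt ((d : ℝ) / (n - r)))
    (hx : Real.sqrt (∑ j, (x j) ^ 2) < 1)
    (hUt : Utᵀ * Ut = 1)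
    (hspan : Ut * Utᵀ * (U₀ + Matrix.of fun k j => if k = i then x j else 0) =
      U₀ + Matrix.of fun k j => if k = i then x j else 0) :
    tti Ut ≤ Real.sqrt ((d : ℝ) / (n - r) +
      Real.sqrt (∑ j, (x j) ^ 2) / (1 - Real.sqrt (∑ j, (x j) ^ 2))) := by
  have hE : (Matrix.of fun k j => if k = i then x j else 0) = vecMulVec (Pi.single i 1) x := by
    ext k j
    simp [vecMulVec_apply, Pi.single_apply]
  rw [hE] at hspan
  have hdr : (0 : ℝ) ≤ d / (n - r) := by
    have : (r : ℝ) < n := by exact_mod_cast (by omega : r < n)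
    exact div_nonneg d.cast_nonneg (by linarith)
  have hrow : ∀ k, ∑ j, U₀ k j ^ 2 ≤ d / (n - r) := fun k =>
    (Real.sqrt_le_sqrt_iff hdr).mp
      ((le_ciSup (Set.finite_range _).bddAbove k).trans hU0tti)
  refine Real.iSup_le (fun k => Real.sqrt_le_sqrt ?_) (Real.sqrt_nonneg _)
  have hk := mul_transpose_self_apply_self_le hU hUt hx hspan k
  rw [mul_transpose_self_apply_self, mul_transpose_self_apply_self] at hk
  linarith [hrow k]
end

section
/- Let Δ̃ and Δ be symmetric positive semidefinite d×d matrices with ‖Δ̃ - Δ‖ ≤ δ‖Δ‖ for some δ ∈ (0,1), and let I_{p,q} = diag(1,...,1,-1,...,-1). Then ‖Δ̃^{1/2} I_{p,q} Δ̃^{1/2} - Δ^{1/2} I_{p,q} Δ^{1/2}‖ ≤ 3√δ ‖Δ‖. -/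
/-!
Write `S̃, S` for the square roots and `J = I_{p,q}`. Then
`S̃ J S̃ - S J S = (S̃ - S) J S̃ + S J (S̃ - S)`, so the difference is at most
`‖S̃ - S‖ (‖Δ̃‖^{1/2} + ‖Δ‖^{1/2}) ≤ √δ ‖Δ‖^{1/2} · 3 ‖Δ‖^{1/2}`.

The perturbation bound `‖S - T‖² ≤ ‖S² - T²‖` for `S, T ⪰ 0` is read off the eigenvectors of the
symmetric matrix `S - T`: for a unit eigenvector `v` with eigenvalue `μ`, put `α = ⟨v, S v⟩ ≥ 0`
and `β = ⟨v, T v⟩ ≥ 0`; then `μ = α - β` and `⟨v, (S² - T²) v⟩ = μ (α + β)`, so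
`μ² ≤ |μ| (α + β) ≤ ‖S² - T²‖`.
-/

open Matrix
open scoped Matrix.Norms.L2Operator

/-- The square root of a positive semidefinite matrix, as defined in Mathlib of December 2024
(removed from Mathlib since). -/
noncomputable def Matrix.PosSemidef.sqrt {n : Type*} [Fintype n] [DecidableEq n]
    {A : Matrix n n ℝ} (hA : A.PosSemidef) : Matrix n n ℝ :=
  hA.1.eigenvectorUnitary.1 * diagonal ((↑) ∘ (√·) ∘ hA.1.eigenvalues) *
  (star hA.1.eigenvectorUnitary : Matrix n n ℝ)

theorem norm_mul_mul_sub_mul_mul_le {R : Type*} [NormedRing R] (a b j : R) :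
    ‖a * j * a - b * j * b‖ ≤ ‖a - b‖ * ‖j‖ * (‖a‖ + ‖b‖) := by
  have hsplit : a * j * a - b * j * b = (a - b) * j * a + b * j * (a - b) := by noncomm_ring
  calc ‖a * j * a - b * j * b‖ ≤ ‖(a - b) * j * a‖ + ‖b * j * (a - b)‖ :=
        hsplit ▸ norm_add_le _ _
    _ ≤ ‖a - b‖ * ‖j‖ * ‖a‖ + ‖b‖ * ‖j‖ * ‖a - b‖ := add_le_add (norm_mul₃_le ..) (norm_mul₃_le ..)
    _ = ‖a - b‖ * ‖j‖ * (‖a‖ + ‖b‖) := by ring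

namespace Matrix

variable {n : Type*} [Fintype n] [DecidableEq n]

theorem IsHermitian.l2_opNorm_eq_norm_eigenvalues {𝕜 : Type*} [RCLike 𝕜] {A : Matrix n n 𝕜}
    (hA : A.IsHermitian) : ‖A‖ = ‖hA.eigenvalues‖ := by
  conv_lhs => rw [hA.spectral_theorem, Unitary.conjStarAlgAut_apply, ← Unitary.coe_star]
  rw [CStarRing.norm_mul_coe_unitary, CStarRing.norm_coe_unitary_mul, l2_opNorm_diagonal]
  simp [Pi.norm_def, Function.comp_def]

theorem abs_dotProduct_mulVec_le (M : Matrix n n ℝ) (x : EuclideanSpace ℝ n) :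
    |x.ofLp ⬝ᵥ M *ᵥ x.ofLp| ≤ ‖M‖ * ‖x‖ ^ 2 := by
  rw [← inner_toEuclideanCLM]
  calc _ ≤ ‖x‖ * ‖toEuclideanCLM (𝕜 := ℝ) M x‖ := abs_real_inner_le_norm _ _
    _ ≤ ‖x‖ * (‖M‖ * ‖x‖) := by gcongr; exact l2_opNorm_mulVec M x
    _ = ‖M‖ * ‖x‖ ^ 2 := by ring

theorem sq_le_l2_opNorm_mul_self_sub_mul_self_of_mulVec_eq {S T : Matrix n n ℝ}
    (hS : S.PosSemidef) (hT : T.PosSemidef) {μ : ℝ} {x : EuclideanSpace ℝ n} (hx : ‖x‖ = 1)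
    (hμ : (S - T) *ᵥ x.ofLp = μ • x.ofLp) : μ ^ 2 ≤ ‖S * S - T * T‖ := by
  set α := x.ofLp ⬝ᵥ S *ᵥ x.ofLp
  set β := x.ofLp ⬝ᵥ T *ᵥ x.ofLp
  have hα : 0 ≤ α := by simpa using hS.dotProduct_mulVec_nonneg x.ofLp
  have hβ : 0 ≤ β := by simpa using hT.dotProduct_mulVec_nonneg x.ofLp
  have hxx : x.ofLp ⬝ᵥ x.ofLp = 1 := by
    have h := real_inner_self_eq_norm_sq x
    rw [hx, EuclideanSpace.inner_eq_star_dotProduct] at h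
    simpa using h
  have hμαβ : μ = α - β := by
    rw [← mul_one μ, ← hxx, ← smul_eq_mul, ← dotProduct_smul, ← hμ, sub_mulVec, dotProduct_sub]
  have hsymm : (S - T)ᵀ = S - T := by
    simpa [conjTranspose_eq_transpose_of_trivial] using (hS.1.sub hT.1).eq
  have hquad : x.ofLp ⬝ᵥ (S * S - T * T) *ᵥ x.ofLp = μ * (α + β) := by
    have hsplit : S * S - T * T = S * (S - T) + (S - T) * T := by noncomm_ring
    rw [hsplit, add_mulVec, dotProduct_add, ← mulVec_mulVec, ← mulVec_mulVec, hμ, mulVec_smul,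
      dotProduct_smul, dotProduct_mulVec x.ofLp (S - T), ← mulVec_transpose, hsymm, hμ,
      smul_dotProduct, smul_eq_mul, smul_eq_mul]
    ring
  have hμ_abs : |μ| ≤ α + β := by rw [hμαβ, abs_le]; constructor <;> linarith
  calc μ ^ 2 = |μ| * |μ| := by rw [sq, abs_mul_abs_self]
    _ ≤ |μ| * (α + β) := by gcongr
    _ = |x.ofLp ⬝ᵥ (S * S - T * T) *ᵥ x.ofLp| := by
      rw [hquad, abs_mul, abs_of_nonneg (add_nonneg hα hβ)]
    _ ≤ ‖S * S - T * T‖ := by simpa [hx] using abs_dotProduct_mulVec_le (S * S - T * T) x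

theorem l2_opNorm_sub_le_sqrt_l2_opNorm_mul_self_sub_mul_self {S T : Matrix n n ℝ}
    (hS : S.PosSemidef) (hT : T.PosSemidef) : ‖S - T‖ ≤ √‖S * S - T * T‖ := by
  have hST := hS.1.sub hT.1
  rw [hST.l2_opNorm_eq_norm_eigenvalues, pi_norm_le_iff_of_nonneg (Real.sqrt_nonneg _)]
  intro i
  rw [Real.norm_eq_abs, ← Real.sqrt_sq_eq_abs]
  exact Real.sqrt_le_sqrt <| sq_le_l2_opNorm_mul_self_sub_mul_self_of_mulVec_eq hS hT
    (hST.eigenvectorBasis.orthonormal.1 i) (hST.mulVec_eigenvectorBasis i)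

namespace PosSemidef

open scoped MatrixOrder

variable {A B : Matrix n n ℝ}

theorem sqrt_eq_cfcSqrt (hA : A.PosSemidef) : hA.sqrt = CFC.sqrt A := by
  rw [CFC.sqrt_eq_cfc, cfc_nnreal_eq_real _ A, hA.1.cfc_eq]
  simp [IsHermitian.cfc, PosSemidef.sqrt, Function.comp_def, hA.eigenvalues_nonneg]

theorem posSemidef_sqrt (hA : A.PosSemidef) : hA.sqrt.PosSemidef := by
  rw [sqrt_eq_cfcSqrt, ← nonneg_iff_posSemidef]
  exact CFC.sqrt_nonneg A

theorem sqrt_mul_self (hA : A.PosSemidef) : hA.sqrt * hA.sqrt = A := by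
  rw [sqrt_eq_cfcSqrt]
  exact CFC.sqrt_mul_sqrt_self A hA.nonneg

theorem l2_opNorm_sqrt (hA : A.PosSemidef) : ‖hA.sqrt‖ = √‖A‖ := by
  rw [sqrt_eq_cfcSqrt]
  exact CFC.norm_sqrt A hA.nonneg

theorem l2_opNorm_sqrt_sub_sqrt_le (hA : A.PosSemidef) (hB : B.PosSemidef) :
    ‖hA.sqrt - hB.sqrt‖ ≤ √‖A - B‖ := by
  simpa only [hA.sqrt_mul_self, hB.sqrt_mul_self] using
    l2_opNorm_sub_le_sqrt_l2_opNorm_mul_self_sub_mul_self hA.posSemidef_sqrt hB.posSemidef_sqrt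

end PosSemidef

end Matrix

theorem l2_opNorm_Ipq_le (p q : ℕ) : ‖Ipq p q‖ ≤ 1 := by
  rw [Ipq, l2_opNorm_diagonal, pi_norm_le_iff_of_nonneg zero_le_one]
  intro i
  split_ifs <;> simp

theorem sqrt_indefinite_perturbation_general {p q : ℕ}
    (Δt Δ : Matrix (Fin (p + q)) (Fin (p + q)) ℝ)
    (hΔt : Δt.PosSemidef) (hΔ : Δ.PosSemidef)
    (δ : ℝ) (hδ1 : δ < 1)
    (h : ‖Δt - Δ‖ ≤ δ * ‖Δ‖) :
    ‖hΔt.sqrt * Ipq p q * hΔt.sqrt - hΔ.sqrt * Ipq p q * hΔ.sqrt‖ ≤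
      3 * Real.sqrt δ * ‖Δ‖ := by
  have hsqrt_sub : ‖hΔt.sqrt - hΔ.sqrt‖ ≤ √δ * √‖Δ‖ :=
    calc ‖hΔt.sqrt - hΔ.sqrt‖ ≤ √‖Δt - Δ‖ := hΔt.l2_opNorm_sqrt_sub_sqrt_le hΔ
      _ ≤ √(δ * ‖Δ‖) := Real.sqrt_le_sqrt h
      _ = √δ * √‖Δ‖ := Real.sqrt_mul' δ (norm_nonneg Δ)
  have hsqrt_Δt : ‖hΔt.sqrt‖ ≤ 2 * √‖Δ‖ := by
    rw [hΔt.l2_opNorm_sqrt, Real.sqrt_le_iff, mul_pow, Real.sq_sqrt (norm_nonneg Δ)]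
    refine ⟨by positivity, ?_⟩
    linarith [norm_le_norm_add_norm_sub' Δt Δ, mul_le_mul_of_nonneg_right hδ1.le (norm_nonneg Δ),
      norm_nonneg Δ]
  calc _ ≤ ‖hΔt.sqrt - hΔ.sqrt‖ * ‖Ipq p q‖ * (‖hΔt.sqrt‖ + ‖hΔ.sqrt‖) :=
        norm_mul_mul_sub_mul_mul_le _ _ _
    _ ≤ (√δ * √‖Δ‖) * 1 * (2 * √‖Δ‖ + √‖Δ‖) := by
        gcongr
        · exact l2_opNorm_Ipq_le p q
        · exact hΔ.l2_opNorm_sqrt.le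
    _ = 3 * √δ * ‖Δ‖ := by linear_combination 3 * √δ * Real.mul_self_sqrt (norm_nonneg Δ)

/-- If `Δ̃, Δ` are positive semidefinite with `‖Δ̃ - Δ‖ ≤ δ ‖Δ‖`, `δ ∈ (0,1)`, then
`‖Δ̃^{1/2} I_{p,q} Δ̃^{1/2} - Δ^{1/2} I_{p,q} Δ^{1/2}‖ ≤ 3 √δ ‖Δ‖`. -/
theorem sqrt_indefinite_perturbation {p q : ℕ}
    (Δt Δ : Matrix (Fin (p + q)) (Fin (p + q)) ℝ)
    (hΔt : Δt.PosSemidef) (hΔ : Δ.PosSemidef)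
    (δ : ℝ) (hδ0 : 0 < δ) (hδ1 : δ < 1)
    (h : ‖Δt - Δ‖ ≤ δ * ‖Δ‖) :
    ‖hΔt.sqrt * Ipq p q * hΔt.sqrt - hΔ.sqrt * Ipq p q * hΔ.sqrt‖ ≤
      3 * Real.sqrt δ * ‖Δ‖ :=
  sqrt_indefinite_perturbation_general Δt Δ hΔt hΔ δ hδ1 h
end
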